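/- arXiv:2503.09486 — 5 statements merged into one kernel-verified Lean document; each statement's English description precedes it below -/
import Mathlib

section
/- Let F(t) = ∫_a^t f(τ) dτ be absolutely continuous on [A,B] with f integrable, and let G(t) = max_{τ ≤ t} F(τ) be its running maximum. Then G(t) = ∫_a^t g(τ) dτ where g = f · 1_{F = G}, i.e., G is absolutely continuous with derivative equal to f on the set where F equals its running maximum and zero elsewhere. -/
/-! The running maximum `G` is absolutely continuous, because its increments are dominated by those
of `∫ |f|`. By the fundamental theorem of calculus for absolutely continuous functions it is
therefore the integral of its a.e. derivative, and at every point where both `F` and `G` are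
differentiable, `G' = f · 1_{F = G}`: where `F < G`, `G` is constant to the right, so `G' = 0`;
where `F = G`, the function `G - F ≥ 0` attains a minimum, so `G' = F' = f`. -/

open MeasureTheory intervalIntegral Set Filter Topology

theorem AbsolutelyContinuousOnInterval.of_dist_le {X Y : Type*} [PseudoMetricSpace X]
    [PseudoMetricSpace Y] {f : ℝ → X} {g : ℝ → Y} {a b : ℝ}
    (hg : AbsolutelyContinuousOnInterval g a b)
    (h : ∀ x ∈ uIcc a b, ∀ y ∈ uIcc a b, dist (f x) (f y) ≤ dist (g x) (g y)) :
    AbsolutelyContinuousOnInterval f a b := by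
  refine squeeze_zero' (Eventually.of_forall fun E ↦ Finset.sum_nonneg fun _ _ ↦ dist_nonneg)
    ?_ hg
  filter_upwards [mem_inf_of_right (mem_principal_self _)] with E hE
  exact Finset.sum_le_sum fun i hi ↦ h _ (hE.1 i hi).1 _ (hE.1 i hi).2

section RunningMax

variable {F G : ℝ → ℝ} {a b x y : ℝ}

theorem runningMax_eq_max (hF : ContinuousOn F (Icc a b))
    (hG : ∀ t ∈ Icc a b, G t = sSup (F '' Icc a t))
    (hax : a ≤ x) (hxy : x ≤ y) (hyb : y ≤ b) :
    G y = max (G x) (sSup (F '' Icc x y)) := by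
  have hbdd {u v : ℝ} (hu : a ≤ u) (hv : v ≤ b) : BddAbove (F '' Icc u v) :=
    isCompact_Icc.bddAbove_image (hF.mono (Icc_subset_Icc hu hv))
  rw [hG y ⟨hax.trans hxy, hyb⟩, hG x ⟨hax, hxy.trans hyb⟩,
    ← Icc_union_Icc_eq_Icc hax hxy, image_union,
    csSup_union (hbdd le_rfl (hxy.trans hyb)) ((nonempty_Icc.2 hax).image F)
      (hbdd hax hyb) ((nonempty_Icc.2 hxy).image F)]

theorem le_runningMax (hF : ContinuousOn F (Icc a b))
    (hG : ∀ t ∈ Icc a b, G t = sSup (F '' Icc a t)) (hx : x ∈ Icc a b) : F x ≤ G x := by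
  rw [hG x hx]
  exact le_csSup (isCompact_Icc.bddAbove_image (hF.mono (Icc_subset_Icc_right hx.2)))
    (mem_image_of_mem F ⟨hx.1, le_rfl⟩)

theorem dist_runningMax_le {Φ : ℝ → ℝ} (hF : ContinuousOn F (Icc a b))
    (hG : ∀ t ∈ Icc a b, G t = sSup (F '' Icc a t))
    (hΦ : ∀ x y, a ≤ x → x ≤ y → y ≤ b → dist (F x) (F y) ≤ Φ y - Φ x)
    (hax : a ≤ x) (hxy : x ≤ y) (hyb : y ≤ b) : dist (G x) (G y) ≤ Φ y - Φ x := by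
  obtain ⟨s, hs, hmax⟩ := isCompact_Icc.exists_isMaxOn (nonempty_Icc.2 hxy)
    (hF.mono (Icc_subset_Icc hax hyb))
  have hsup : sSup (F '' Icc x y) = F s :=
    (IsGreatest.csSup_eq ⟨mem_image_of_mem F hs, forall_mem_image.2 fun τ hτ ↦ hmax hτ⟩)
  have hsplit := runningMax_eq_max hF hG hax hxy hyb
  rw [hsup] at hsplit
  have hFx := le_runningMax hF hG ⟨hax, hxy.trans hyb⟩
  have hxs := hΦ x s hax hs.1 (hs.2.trans hyb)
  have hsy := hΦ s y (hax.trans hs.1) hs.2 hyb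
  rw [Real.dist_eq] at hxs hsy ⊢
  rw [abs_le] at hxs hsy
  rw [abs_sub_comm, abs_of_nonneg (by rw [hsplit]; linarith [le_max_left (G x) (F s)])]
  rcases max_cases (G x) (F s) with ⟨h, _⟩ | ⟨h, _⟩ <;> rw [hsplit, h] <;> linarith

theorem absolutelyContinuousOnInterval_runningMax {Φ : ℝ → ℝ} (hab : a ≤ b)
    (hF : ContinuousOn F (Icc a b)) (hG : ∀ t ∈ Icc a b, G t = sSup (F '' Icc a t))
    (hΦac : AbsolutelyContinuousOnInterval Φ a b)
    (hΦ : ∀ x y, a ≤ x → x ≤ y → y ≤ b → dist (F x) (F y) ≤ Φ y - Φ x) :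
    AbsolutelyContinuousOnInterval G a b := by
  refine hΦac.of_dist_le fun x hx y hy ↦ ?_
  rw [uIcc_of_le hab] at hx hy
  rcases le_total x y with hxy | hyx
  · exact (dist_runningMax_le hF hG hΦ hx.1 hxy hy.2).trans ((le_abs_self _).trans
      (by rw [Real.dist_eq, abs_sub_comm]))
  · rw [dist_comm, dist_comm (Φ x)]
    exact (dist_runningMax_le hF hG hΦ hy.1 hyx hx.2).trans ((le_abs_self _).trans
      (by rw [Real.dist_eq, abs_sub_comm]))

theorem runningMax_eventuallyEq_of_lt (hF : ContinuousOn F (Icc a b))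
    (hG : ∀ t ∈ Icc a b, G t = sSup (F '' Icc a t)) (hx : x ∈ Ico a b) (hlt : F x < G x) :
    G =ᶠ[𝓝[≥] x] fun _ ↦ G x := by
  have hFlt : ∀ᶠ y in 𝓝[≥] x, F y < G x := by
    rw [← nhdsWithin_Icc_eq_nhdsGE hx.2]
    exact ((hF.continuousWithinAt (Ico_subset_Icc_self hx)).mono
      (Icc_subset_Icc_left hx.1)).eventually_lt_const hlt
  obtain ⟨u, hxu, hu⟩ := mem_nhdsGE_iff_exists_Ico_subset.1 (hFlt.and (Icc_mem_nhdsGE hx.2))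
  filter_upwards [Ico_mem_nhdsGE hxu] with y hy
  rw [runningMax_eq_max hF hG hx.1 hy.1 (hu hy).2.2, max_eq_left]
  exact csSup_le ((nonempty_Icc.2 hy.1).image F)
    (forall_mem_image.2 fun s hs ↦ (hu ⟨hs.1, hs.2.trans_lt hy.2⟩).1.le)

theorem runningMax_hasDerivAt {f : ℝ → ℝ} {g' : ℝ} (hF : ContinuousOn F (Icc a b))
    (hG : ∀ t ∈ Icc a b, G t = sSup (F '' Icc a t)) (hx : x ∈ Ioo a b)
    (hFx : HasDerivAt F (f x) x) (hGx : HasDerivAt G g' x) :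
    g' = {τ | F τ = G τ}.indicator f x := by
  by_cases hx' : F x = G x
  · rw [indicator_of_mem (s := {τ | F τ = G τ}) hx']
    have hmin : IsLocalMin (G - F) x := by
      filter_upwards [Icc_mem_nhds hx.1 hx.2] with y hy
      simp [hx', le_runningMax hF hG hy]
    linarith [hmin.hasDerivAt_eq_zero (hGx.sub hFx)]
  · rw [indicator_of_notMem (s := {τ | F τ = G τ}) hx']
    have hlt := (le_runningMax hF hG (Ioo_subset_Icc_self hx)).lt_of_ne hx'
    exact (uniqueDiffWithinAt_Ici x).eq_deriv _ hGx.hasDerivWithinAt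
      ((hasDerivWithinAt_const x _ (G x)).congr_of_eventuallyEq
        (runningMax_eventuallyEq_of_lt hF hG (Ioo_subset_Ico_self hx) hlt) rfl)

end RunningMax

theorem dist_intervalIntegral_le_intervalIntegral_abs {f : ℝ → ℝ} {a b x y : ℝ}
    (hf : IntervalIntegrable f volume a b) (hax : a ≤ x) (hxy : x ≤ y) (hyb : y ≤ b) :
    dist (∫ τ in a..x, f τ) (∫ τ in a..y, f τ) ≤
      (∫ τ in a..y, |f τ|) - ∫ τ in a..x, |f τ| := by
  have hsub {g : ℝ → ℝ} (hg : IntervalIntegrable g volume a b) :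
      (∫ τ in a..y, g τ) - ∫ τ in a..x, g τ = ∫ τ in x..y, g τ :=
    integral_interval_sub_left (hg.mono_set (uIcc_subset_uIcc_left (by grind [uIcc])))
      (hg.mono_set (uIcc_subset_uIcc_left (by grind [uIcc])))
  rw [dist_comm, Real.dist_eq, hsub hf, hsub hf.abs]
  exact abs_integral_le_integral_abs hxy

section Primitive

variable {f F G : ℝ → ℝ} {a b : ℝ}

theorem absolutelyContinuousOnInterval_runningMax_of_primitive (hab : a ≤ b)
    (hf : IntervalIntegrable f volume a b) (hFc : ContinuousOn F (Icc a b))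
    (hF : ∀ t ∈ Icc a b, F t = ∫ τ in a..t, f τ)
    (hG : ∀ t ∈ Icc a b, G t = sSup (F '' Icc a t)) :
    AbsolutelyContinuousOnInterval G a b :=
  absolutelyContinuousOnInterval_runningMax hab hFc hG
    (hf.abs.absolutelyContinuousOnInterval_intervalIntegral left_mem_uIcc)
    fun x y hax hxy hyb ↦ by
      rw [hF x ⟨hax, hxy.trans hyb⟩, hF y ⟨hax.trans hxy, hyb⟩]
      exact dist_intervalIntegral_le_intervalIntegral_abs hf hax hxy hyb

theorem ae_hasDerivAt_runningMax_of_primitive (hab : a ≤ b)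
    (hf : IntervalIntegrable f volume a b) (hFc : ContinuousOn F (Icc a b))
    (hF : ∀ t ∈ Icc a b, F t = ∫ τ in a..t, f τ)
    (hG : ∀ t ∈ Icc a b, G t = sSup (F '' Icc a t)) :
    ∀ᵐ x, x ∈ Icc a b → HasDerivAt G ({τ | F τ = G τ}.indicator f x) x := by
  filter_upwards [(absolutelyContinuousOnInterval_runningMax_of_primitive hab hf hFc hF hG)
      |>.ae_differentiableAt, hf.ae_hasDerivAt_integral, (Ioo_ae_eq_Icc (a := a) (b := b)).mem_iff]
    with x hGx hFx hIoo hx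
  have hxI : x ∈ Ioo a b := hIoo.2 hx
  rw [← uIcc_of_le hab] at hx
  have hFx' : HasDerivAt F (f x) x :=
    (hFx hx a left_mem_uIcc).congr_of_eventuallyEq
      (eventually_of_mem (Icc_mem_nhds hxI.1 hxI.2) hF)
  have hGx' := (hGx hx).hasDerivAt
  rwa [runningMax_hasDerivAt hFc hG hxI hFx' hGx'] at hGx'

end Primitive

theorem stmt1_general (A B : ℝ) (f : ℝ → ℝ)
    (hf : IntegrableOn f (Set.Icc A B))
    (F G : ℝ → ℝ)
    (hF : ∀ t ∈ Set.Icc A B, F t = ∫ τ in A..t, f τ)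
    (hG : ∀ t ∈ Set.Icc A B, G t = sSup (F '' Set.Icc A t)) :
    ∀ t ∈ Set.Icc A B,
      G t = ∫ τ in A..t, Set.indicator {τ : ℝ | F τ = G τ} f τ := by
  intro t ht
  have hAB : A ≤ B := ht.1.trans ht.2
  have hfi : IntervalIntegrable f volume A B :=
    (intervalIntegrable_iff_integrableOn_Icc_of_le hAB).2 hf
  have hFc : ContinuousOn F (Icc A B) := by
    rw [← uIcc_of_le hAB] at hf hF ⊢
    exact (continuousOn_primitive_interval hf).congr hF
  have hGA : G A = 0 := by
    rw [hG A ⟨le_rfl, hAB⟩, Icc_self, image_singleton, csSup_singleton, hF A ⟨le_rfl, hAB⟩,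
      integral_same]
  have hsub : uIcc A t ⊆ uIcc A B := by
    rw [uIcc_of_le ht.1, uIcc_of_le hAB]; exact Icc_subset_Icc_right ht.2
  calc G t = G t - G A := by rw [hGA, sub_zero]
    _ = ∫ τ in A..t, deriv G τ :=
      ((absolutelyContinuousOnInterval_runningMax_of_primitive hAB hfi hFc hF hG).mono
        hsub).integral_deriv_eq_sub.symm
    _ = ∫ τ in A..t, {τ | F τ = G τ}.indicator f τ := by
      refine integral_congr_ae ?_
      filter_upwards [ae_hasDerivAt_runningMax_of_primitive hAB hfi hFc hF hG] with x hx hxt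
      rw [uIoc_of_le ht.1] at hxt
      exact (hx ⟨hxt.1.le, hxt.2.trans ht.2⟩).deriv

/-- If `F t = ∫_A^t f` with `f` integrable on `[A,B]` and `G` is the running maximum of `F`,
then `G t = ∫_A^t f · 1_{F = G}`. -/
theorem stmt1 (A B : ℝ) (hAB : A < B) (f : ℝ → ℝ)
    (hf : IntegrableOn f (Set.Icc A B))
    (F G : ℝ → ℝ)
    (hF : ∀ t ∈ Set.Icc A B, F t = ∫ τ in A..t, f τ)
    (hG : ∀ t ∈ Set.Icc A B, G t = sSup (F '' Set.Icc A t)) :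
    ∀ t ∈ Set.Icc A B,
      G t = ∫ τ in A..t, Set.indicator {τ : ℝ | F τ = G τ} f τ :=
  stmt1_general A B f hf F G hF hG
end

section
/- Let {ρᵢ} be a sequence of nonincreasing nonnegative functions on [A,B] with ∫_A^B ρᵢ^{3/2} < M for all i. Then some subsequence converges in L¹([A,B]) to a function ρ with ∫_A^B ρ^{3/2} ≤ liminf ∫_A^B ρᵢ^{3/2}. -/
open MeasureTheory Set Filter Topology Bornology

/-! Monotonicity turns the energy bound into the pointwise bound
`ρᵢ t ≤ M^{2/3} (t - A)^{-2/3}`, an integrable majorant. After passing to a subsequence along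
which the energies tend to their liminf, Helly's selection theorem (a diagonal extraction on the
rationals; the limit is then monotone and the sequence converges at each of its continuity
points) gives a subsequence converging almost everywhere. Dominated convergence yields the `L¹`
convergence and Fatou's lemma the energy bound. -/

theorem rpow_mul_sub_le_setIntegral_of_antitoneOn {f : ℝ → ℝ} {A B p t : ℝ} (hp : 0 ≤ p)
    (hf : AntitoneOn f (Icc A B)) (hf0 : ∀ τ ∈ Icc A B, 0 ≤ f τ)
    (hint : IntegrableOn (fun τ => f τ ^ p) (Icc A B)) (ht : t ∈ Icc A B) :
    f t ^ p * (t - A) ≤ ∫ τ in Icc A B, f τ ^ p := by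
  have hsub : Icc A t ⊆ Icc A B := Icc_subset_Icc_right ht.2
  calc f t ^ p * (t - A) = ∫ _ in Icc A t, f t ^ p := by
        rw [setIntegral_const, Real.volume_real_Icc_of_le ht.1, smul_eq_mul, mul_comm]
    _ ≤ ∫ τ in Icc A t, f τ ^ p :=
        setIntegral_mono_on (integrableOn_const measure_Icc_lt_top.ne) (hint.mono_set hsub)
          measurableSet_Icc fun τ hτ => Real.rpow_le_rpow (hf0 t ht) (hf (hsub hτ) ht hτ.2) hp
    _ ≤ ∫ τ in Icc A B, f τ ^ p :=
        setIntegral_mono_set hint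
          ((ae_restrict_iff' measurableSet_Icc).2 <| .of_forall fun τ hτ =>
            Real.rpow_nonneg (hf0 τ hτ) p)
          hsub.eventuallyLE

theorem le_rpow_inv_mul_rpow_neg_inv_of_rpow_mul_le {x c d p : ℝ} (hx : 0 ≤ x) (hp : 0 < p)
    (hd : 0 < d) (h : x ^ p * d ≤ c) : x ≤ c ^ p⁻¹ * d ^ (-p⁻¹) := by
  have hc : 0 ≤ c := (mul_nonneg (Real.rpow_nonneg hx p) hd.le).trans h
  calc x = (x ^ p) ^ p⁻¹ := (Real.rpow_rpow_inv hx hp.ne').symm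
    _ ≤ (c / d) ^ p⁻¹ :=
        Real.rpow_le_rpow (Real.rpow_nonneg hx p) ((le_div_iff₀ hd).2 h) (inv_nonneg.2 hp.le)
    _ = c ^ p⁻¹ * d ^ (-p⁻¹) := by
        rw [Real.div_rpow hc hd.le, Real.rpow_neg hd.le, div_eq_mul_inv]

theorem AntitoneOn.le_mul_rpow_of_setIntegral_rpow_le {f : ℝ → ℝ} {A B M p t : ℝ}
    (hf : AntitoneOn f (Icc A B)) (hp : 0 < p) (hf0 : ∀ τ ∈ Icc A B, 0 ≤ f τ)
    (hint : IntegrableOn (fun τ => f τ ^ p) (Icc A B)) (hM : ∫ τ in Icc A B, f τ ^ p ≤ M)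
    (ht : t ∈ Ioc A B) : f t ≤ M ^ p⁻¹ * (t - A) ^ (-p⁻¹) :=
  le_rpow_inv_mul_rpow_neg_inv_of_rpow_mul_le (hf0 t (Ioc_subset_Icc_self ht)) hp
    (sub_pos.2 ht.1)
    ((rpow_mul_sub_le_setIntegral_of_antitoneOn hp.le hf hf0 hint
      (Ioc_subset_Icc_self ht)).trans hM)

theorem integrableOn_sub_rpow_Icc {A B r : ℝ} (hr : -1 < r) :
    IntegrableOn (fun t => (t - A) ^ r) (Icc A B) := by
  have h : IntervalIntegrable (fun t => (t - A) ^ r) volume A B := by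
    simpa using
      (intervalIntegral.intervalIntegrable_rpow' (a := 0) (b := B - A) hr).comp_sub_right A
  exact ((intervalIntegrable_iff' (by finiteness)).1 h).mono_set Icc_subset_uIcc

theorem tendsto_integral_norm_sub_of_dominated_convergence {α E : Type*} [MeasurableSpace α]
    {μ : Measure α} [NormedAddCommGroup E] {F : ℕ → α → E} {f : α → E} (bound : α → ℝ)
    (F_measurable : ∀ n, AEStronglyMeasurable (F n) μ) (bound_integrable : Integrable bound μ)
    (h_bound : ∀ n, ∀ᵐ a ∂μ, ‖F n a‖ ≤ bound a)
    (h_lim : ∀ᵐ a ∂μ, Tendsto (fun n => F n a) atTop (𝓝 (f a))) :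
    Tendsto (fun n => ∫ a, ‖F n a - f a‖ ∂μ) atTop (𝓝 0) := by
  have f_measurable : AEStronglyMeasurable f μ :=
    aestronglyMeasurable_of_tendsto_ae _ F_measurable h_lim
  have h := tendsto_lintegral_norm_of_dominated_convergence F_measurable
    bound_integrable.hasFiniteIntegral h_bound h_lim
  refine ((ENNReal.tendsto_toReal ENNReal.zero_ne_top).comp h).congr fun n => ?_
  exact (integral_eq_lintegral_of_nonneg_ae (.of_forall fun a => norm_nonneg _)
    ((F_measurable n).sub f_measurable).norm).symm

theorem integral_le_of_tendsto_integral_of_tendsto_ae {α : Type*} [MeasurableSpace α]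
    {μ : Measure α} {F : ℕ → α → ℝ} {f : α → ℝ} {l : ℝ}
    (hF_nonneg : ∀ n, 0 ≤ᵐ[μ] F n) (hF_int : ∀ n, Integrable (F n) μ)
    (h_lim : ∀ᵐ a ∂μ, Tendsto (fun n => F n a) atTop (𝓝 (f a)))
    (h_int_lim : Tendsto (fun n => ∫ a, F n a ∂μ) atTop (𝓝 l)) :
    ∫ a, f a ∂μ ≤ l := by
  have hf_nonneg : 0 ≤ᵐ[μ] f := by
    filter_upwards [h_lim, ae_all_iff.2 hF_nonneg] with a ha hF
    exact ge_of_tendsto' ha hF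
  have hl : 0 ≤ l := ge_of_tendsto' h_int_lim fun n => integral_nonneg_of_ae (hF_nonneg n)
  have hfatou : ∫⁻ a, ENNReal.ofReal (f a) ∂μ ≤ ENNReal.ofReal l :=
    calc ∫⁻ a, ENNReal.ofReal (f a) ∂μ
        = ∫⁻ a, liminf (fun n => ENNReal.ofReal (F n a)) atTop ∂μ := by
          refine lintegral_congr_ae ?_
          filter_upwards [h_lim] with a ha
          exact ((ENNReal.continuous_ofReal.tendsto _).comp ha).liminf_eq.symm
      _ ≤ liminf (fun n => ∫⁻ a, ENNReal.ofReal (F n a) ∂μ) atTop :=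
          lintegral_liminf_le' fun n => (hF_int n).aemeasurable.ennreal_ofReal
      _ = ENNReal.ofReal l := by
          refine Tendsto.liminf_eq ?_
          refine ((ENNReal.continuous_ofReal.tendsto l).comp h_int_lim).congr fun n => ?_
          exact ofReal_integral_eq_lintegral_ofReal (hF_int n) (hF_nonneg n)
  rw [integral_eq_lintegral_of_nonneg_ae hf_nonneg
    (aestronglyMeasurable_of_tendsto_ae _ (fun n => (hF_int n).aestronglyMeasurable) h_lim)]
  exact ENNReal.toReal_le_of_le_ofReal hl hfatou

theorem exists_subseq_tendsto_pi_of_isBounded {ι X : Type*} [Countable ι]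
    [PseudoMetricSpace X] [ProperSpace X] {u : ℕ → ι → X}
    (hu : ∀ k, IsBounded (range fun i => u i k)) :
    ∃ φ : ℕ → ℕ, StrictMono φ ∧ ∃ h : ι → X,
      ∀ k, Tendsto (fun i => u (φ i) k) atTop (𝓝 (h k)) := by
  have hK : IsCompact (univ.pi fun k => closure (range fun i => u i k)) :=
    isCompact_univ_pi fun k => (hu k).isCompact_closure
  obtain ⟨h, -, φ, hφ, hlim⟩ :=
    hK.tendsto_subseq fun i k _ => subset_closure (mem_range_self i)
  exact ⟨φ, hφ, h, fun k => tendsto_pi_nhds.1 hlim k⟩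

theorem tendsto_of_antitoneOn_of_tendsto_dense {f : ℕ → ℝ → ℝ} {ρ : ℝ → ℝ} {s D : Set ℝ}
    {t : ℝ} (hf : ∀ i, AntitoneOn (f i) s) (hs : s ∈ 𝓝 t) (hD : Dense D)
    (hconv : ∀ d ∈ D ∩ s, Tendsto (fun i => f i d) atTop (𝓝 (ρ d)))
    (hρ : ContinuousAt ρ t) (ht : t ∈ s) :
    Tendsto (fun i => f i t) atTop (𝓝 (ρ t)) := by
  refine tendsto_order.2 ⟨fun b hb => ?_, fun b hb => ?_⟩
  · obtain ⟨l, u, ⟨hl, hu⟩, hsub⟩ :=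
      mem_nhds_iff_exists_Ioo_subset.1 (inter_mem hs (hρ.eventually (lt_mem_nhds hb)))
    obtain ⟨d, hdD, htd, hdu⟩ := hD.exists_between hu
    have hd : d ∈ s ∩ {x | b < ρ x} := hsub ⟨hl.trans htd, hdu⟩
    filter_upwards [(tendsto_order.1 (hconv d ⟨hdD, hd.1⟩)).1 b hd.2] with i hi
    exact hi.trans_le (hf i ht hd.1 htd.le)
  · obtain ⟨l, u, ⟨hl, hu⟩, hsub⟩ :=
      mem_nhds_iff_exists_Ioo_subset.1 (inter_mem hs (hρ.eventually (gt_mem_nhds hb)))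
    obtain ⟨d, hdD, hld, hdt⟩ := hD.exists_between hl
    have hd : d ∈ s ∩ {x | ρ x < b} := hsub ⟨hld, hdt.trans hu⟩
    filter_upwards [(tendsto_order.1 (hconv d ⟨hdD, hd.1⟩)).2 b hd.2] with i hi
    exact (hf i hd.1 ht hdt.le).trans_lt hi

theorem exists_subseq_tendsto_of_antitoneOn {s : Set ℝ} (hs : IsOpen s) {f : ℕ → ℝ → ℝ}
    (hf : ∀ i, AntitoneOn (f i) s) (hbdd : ∀ t ∈ s, IsBounded (range fun i => f i t)) :
    ∃ φ : ℕ → ℕ, StrictMono φ ∧ ∃ ρ : ℝ → ℝ,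
      {t ∈ s | ¬Tendsto (fun i => f (φ i) t) atTop (𝓝 (ρ t))}.Countable := by
  set D : Set ℝ := range ((↑) : ℚ → ℝ)
  have : Countable ↥(D ∩ s) := ((countable_range _).mono inter_subset_left).to_subtype
  obtain ⟨φ, hφ, h, hh⟩ := exists_subseq_tendsto_pi_of_isBounded
    (u := fun i (d : ↥(D ∩ s)) => f i d) fun d => hbdd d d.2.2
  have hsub : ∀ t ∈ s, IsBounded (range fun i => f (φ i) t) := fun t ht =>
    (hbdd t ht).subset (range_comp_subset_range φ fun i => f i t)
  -- any extension of the limits on `D ∩ s` that is antitone on `s` would do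
  set ρ : ℝ → ℝ := fun t => limsup (fun i => f (φ i) t) atTop
  have hconv : ∀ d ∈ D ∩ s, Tendsto (fun i => f (φ i) d) atTop (𝓝 (ρ d)) := fun d hd => by
    simpa only [ρ, (hh ⟨d, hd⟩).limsup_eq] using hh ⟨d, hd⟩
  have hρ : AntitoneOn ρ s := fun x hx y hy hxy =>
    limsup_le_limsup (Eventually.of_forall fun i => hf (φ i) hx hy hxy)
      (hsub y hy).bddBelow.isBoundedUnder_of_range.isCoboundedUnder_le
      (hsub x hx).bddAbove.isBoundedUnder_of_range
  refine ⟨φ, hφ, ρ, hρ.countable_not_continuousWithinAt.mono ?_⟩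
  rintro t ⟨ht, hnot⟩
  refine ⟨ht, fun hc => hnot ?_⟩
  exact tendsto_of_antitoneOn_of_tendsto_dense (fun i => hf (φ i)) (hs.mem_nhds ht)
    Rat.denseRange_cast hconv (hc.continuousAt (hs.mem_nhds ht)) ht

theorem ae_mem_Ioo_restrict_Icc (A B : ℝ) : ∀ᵐ t ∂volume.restrict (Icc A B), t ∈ Ioo A B := by
  rw [Measure.restrict_congr_set Ioo_ae_eq_Icc.symm]
  exact ae_restrict_mem measurableSet_Ioo

theorem exists_subseq_tendsto_ae_of_antitoneOn_Icc {A B : ℝ} {f : ℕ → ℝ → ℝ}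
    (hf : ∀ i, AntitoneOn (f i) (Icc A B))
    (hbdd : ∀ t ∈ Ioo A B, IsBounded (range fun i => f i t)) :
    ∃ φ : ℕ → ℕ, StrictMono φ ∧ ∃ ρ : ℝ → ℝ,
      ∀ᵐ t ∂volume.restrict (Icc A B), Tendsto (fun i => f (φ i) t) atTop (𝓝 (ρ t)) := by
  obtain ⟨φ, hφ, ρ, hρ⟩ := exists_subseq_tendsto_of_antitoneOn isOpen_Ioo
    (fun i => (hf i).mono Ioo_subset_Icc_self) hbdd
  refine ⟨φ, hφ, ρ, ?_⟩
  filter_upwards [ae_mem_Ioo_restrict_Icc A B, ae_restrict_of_ae (hρ.ae_notMem volume)]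
    with t ht hnot
  by_contra h
  exact hnot ⟨ht, h⟩

theorem stmt7_general (A B : ℝ) (M : ℝ)
    (ρs : ℕ → ℝ → ℝ)
    (hanti : ∀ i, AntitoneOn (ρs i) (Set.Icc A B))
    (hnonneg : ∀ i, ∀ t ∈ Set.Icc A B, 0 ≤ ρs i t)
    (hint : ∀ i, IntegrableOn (fun τ => ρs i τ ^ (3 / 2 : ℝ)) (Set.Icc A B))
    (hbound : ∀ i, (∫ τ in Set.Icc A B, ρs i τ ^ (3 / 2 : ℝ)) < M) :
    ∃ (φ : ℕ → ℕ) (ρ : ℝ → ℝ), StrictMono φ ∧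
      Tendsto (fun i => ∫ τ in Set.Icc A B, |ρs (φ i) τ - ρ τ|) atTop (nhds 0) ∧
      (∫ τ in Set.Icc A B, ρ τ ^ (3 / 2 : ℝ)) ≤
        Filter.liminf (fun i => ∫ τ in Set.Icc A B, ρs i τ ^ (3 / 2 : ℝ)) atTop := by
  set E : ℕ → ℝ := fun i => ∫ τ in Icc A B, ρs i τ ^ (3 / 2 : ℝ)
  have hE_nonneg : ∀ i, 0 ≤ E i := fun i =>
    setIntegral_nonneg measurableSet_Icc fun τ hτ => Real.rpow_nonneg (hnonneg i τ hτ) _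
  obtain ⟨ψ, hψ, hEψ⟩ := (MapClusterPt.liminf (u := E) (f := atTop)
    (isBoundedUnder_of ⟨M, fun i => (hbound i).le⟩).isCoboundedUnder_ge
    (isBoundedUnder_of ⟨0, hE_nonneg⟩)).tendsto_subseq
  set g : ℝ → ℝ := fun t => M ^ (3 / 2 : ℝ)⁻¹ * (t - A) ^ (-(3 / 2 : ℝ)⁻¹)
  have hρs_le : ∀ i, ∀ t ∈ Ioc A B, ρs i t ≤ g t := fun i t ht =>
    (hanti i).le_mul_rpow_of_setIntegral_rpow_le (by norm_num) (hnonneg i) (hint i)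
      (hbound i).le ht
  have hdom : ∀ i, ∀ᵐ t ∂volume.restrict (Icc A B), ‖ρs i t‖ ≤ g t := fun i => by
    filter_upwards [ae_mem_Ioo_restrict_Icc A B] with t ht
    rw [Real.norm_of_nonneg (hnonneg i t (Ioo_subset_Icc_self ht))]
    exact hρs_le i t (Ioo_subset_Ioc_self ht)
  obtain ⟨φ, hφ, ρ, hlim⟩ := exists_subseq_tendsto_ae_of_antitoneOn_Icc
    (fun i => hanti (ψ i)) fun t ht =>
      (Metric.isBounded_Icc 0 (g t)).subset <| range_subset_iff.2 fun i =>
        ⟨hnonneg _ t (Ioo_subset_Icc_self ht), hρs_le _ t (Ioo_subset_Ioc_self ht)⟩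
  refine ⟨fun i => ψ (φ i), ρ, hψ.comp hφ, ?_, ?_⟩
  · simpa only [Real.norm_eq_abs] using tendsto_integral_norm_sub_of_dominated_convergence g
      (fun i =>
        (aemeasurable_restrict_of_antitoneOn measurableSet_Icc (hanti _)).aestronglyMeasurable)
      ((integrableOn_sub_rpow_Icc (by norm_num)).const_mul _) (fun i => hdom _) hlim
  · refine integral_le_of_tendsto_integral_of_tendsto_ae
      (F := fun i t => ρs (ψ (φ i)) t ^ (3 / 2 : ℝ))
      (fun i => (ae_restrict_iff' measurableSet_Icc).2 <| .of_forall fun t ht =>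
        Real.rpow_nonneg (hnonneg _ t ht) _)
      (fun i => hint _) ?_ (hEψ.comp hφ.tendsto_atTop)
    filter_upwards [hlim] with t ht
    exact ((Real.continuous_rpow_const (by norm_num)).tendsto _).comp ht

/-- A sequence of nonincreasing nonnegative functions on `[A,B]` with uniformly bounded
`L^{3/2}`-type energy `∫ ρᵢ^{3/2} < M` has a subsequence converging in `L¹` to some `ρ`
with `∫ ρ^{3/2} ≤ liminf ∫ ρᵢ^{3/2}`. -/
theorem stmt7 (A B : ℝ) (hAB : A < B) (M : ℝ) (hM : 0 < M)
    (ρs : ℕ → ℝ → ℝ)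
    (hanti : ∀ i, AntitoneOn (ρs i) (Set.Icc A B))
    (hnonneg : ∀ i, ∀ t ∈ Set.Icc A B, 0 ≤ ρs i t)
    (hint : ∀ i, IntegrableOn (fun τ => ρs i τ ^ (3 / 2 : ℝ)) (Set.Icc A B))
    (hbound : ∀ i, (∫ τ in Set.Icc A B, ρs i τ ^ (3 / 2 : ℝ)) < M) :
    ∃ (φ : ℕ → ℕ) (ρ : ℝ → ℝ), StrictMono φ ∧
      Tendsto (fun i => ∫ τ in Set.Icc A B, |ρs (φ i) τ - ρ τ|) atTop (nhds 0) ∧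
      (∫ τ in Set.Icc A B, ρ τ ^ (3 / 2 : ℝ)) ≤
        Filter.liminf (fun i => ∫ τ in Set.Icc A B, ρs i τ ^ (3 / 2 : ℝ)) atTop :=
  stmt7_general A B M ρs hanti hnonneg hint hbound
end

section
/- Fix real numbers t₀ and L(t₀), and consider linear functions L on [s,τ] ⊆ (0,∞) with fixed value L(s) and slope m. The quantity ∫_s^τ -(L(t')/t' - m)² dt', viewed as a function of the slope m, is a quadratic function of m maximized at m = L(s)/s. -/
/-!
Since `L(t') = c + m (t' - s)`, the integrand simplifies to `-((c - m s) / t')²`, so the integral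
equals `-(c - m s)² (1/s - 1/τ)`: a quadratic in `m` with nonpositive leading coefficient,
vanishing exactly at `m = c / s`.
-/

open intervalIntegral

lemma linear_div_sub_slope {c m s t : ℝ} (ht : t ≠ 0) :
    (c + m * (t - s)) / t - m = (c - m * s) / t := by
  field_simp
  ring

lemma integral_zpow_neg_two {a b : ℝ} (h : (0 : ℝ) ∉ Set.uIcc a b) :
    ∫ t in a..b, t ^ (-2 : ℤ) = a⁻¹ - b⁻¹ := by
  rw [integral_zpow (Or.inr ⟨by decide, h⟩)]
  norm_num
  ring

lemma integral_neg_sq_linear_div_sub_slope {s τ : ℝ} (h : (0 : ℝ) ∉ Set.uIcc s τ) (c m : ℝ) :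
    ∫ t in s..τ, -((c + m * (t - s)) / t - m) ^ 2 = -(c - m * s) ^ 2 * (s⁻¹ - τ⁻¹) := by
  have hEq : Set.EqOn (fun t : ℝ => -((c + m * (t - s)) / t - m) ^ 2)
      (fun t : ℝ => -(c - m * s) ^ 2 * t ^ (-2 : ℤ)) (Set.uIcc s τ) := by
    intro t ht
    have ht0 : t ≠ 0 := fun h0 => h (h0 ▸ ht)
    simp only [linear_div_sub_slope ht0, zpow_neg, zpow_two, sq]
    ring
  rw [integral_congr hEq, integral_const_mul, integral_zpow_neg_two h]

/-- For a linear function `L(t') = c + m(t'-s)` on `[s,τ] ⊆ (0,∞)` with fixed value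
`c = L(s)` and slope `m`, the quantity `∫_s^τ -(L(t')/t' - m)² dt'` is a quadratic
function of `m`, maximized at `m = c/s`. -/
theorem stmt13 (s τ : ℝ) (hs : 0 < s) (hsτ : s < τ) (c : ℝ) :
    (∃ α β γ : ℝ, ∀ m : ℝ,
      (∫ t' in s..τ, -((c + m * (t' - s)) / t' - m) ^ 2) = α * m ^ 2 + β * m + γ) ∧
    (∀ m : ℝ,
      (∫ t' in s..τ, -((c + m * (t' - s)) / t' - m) ^ 2) ≤
        ∫ t' in s..τ, -((c + (c / s) * (t' - s)) / t' - c / s) ^ 2) := by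
  have hzero : (0 : ℝ) ∉ Set.uIcc s τ := by
    rw [Set.uIcc_of_le hsτ.le]
    exact fun h => hs.not_ge h.1
  have hK : 0 ≤ s⁻¹ - τ⁻¹ := sub_nonneg.mpr (inv_anti₀ hs hsτ.le)
  simp only [integral_neg_sq_linear_div_sub_slope hzero]
  refine ⟨⟨-s ^ 2 * (s⁻¹ - τ⁻¹), 2 * c * s * (s⁻¹ - τ⁻¹), -c ^ 2 * (s⁻¹ - τ⁻¹),
    fun m => by ring⟩, fun m => ?_⟩
  rw [div_mul_cancel₀ c hs.ne', sub_self]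
  nlinarith [mul_nonneg (sq_nonneg (c - m * s)) hK]
end

section
/- Suppose F : [s₁,s₂] ⊆ (0,∞) → ℝ is twice continuously differentiable, satisfies F'(t) < F(t)/t on (s₁,s₂), and solves the Euler–Lagrange equation -d/dt[(F(t)/t - F'(t))²] = (1/t)(F(t)/t - F'(t))². Then there exist constants c₁, c₂ such that F(t) = c₁√t + c₂ t on [s₁,s₂]. -/
/-!
Write `G = F/t - F'`. The Euler–Lagrange equation says `(G²)' = -G²/t`, so `t G²` is constant,
and since `G > 0` this gives `G = c/√t`. Hence `F' = F/t - c/√t`, a first-order linear equation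
whose solutions are `2c√t + kt`; continuity carries the identity to the endpoints.
-/

open Set Real

theorem IsOpen.exists_const_of_hasDerivAt_zero {𝕜 E : Type*} [RCLike 𝕜] [NormedAddCommGroup E]
    [NormedSpace 𝕜 E] {s : Set 𝕜} (hs : IsOpen s) (hs' : IsPreconnected s) {f : 𝕜 → E}
    (hf : ∀ x ∈ s, HasDerivAt f 0 x) : ∃ a, ∀ x ∈ s, f x = a :=
  hs.exists_is_const_of_deriv_eq_zero hs'
    (fun x hx => (hf x hx).differentiableAt.differentiableWithinAt) (fun x hx => (hf x hx).deriv)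

theorem IsOpen.exists_mul_eq_const_of_hasDerivAt_neg_div {s : Set ℝ} (hs : IsOpen s)
    (hs' : IsPreconnected s) (hs₀ : ∀ t ∈ s, t ≠ 0) {y : ℝ → ℝ}
    (hy : ∀ t ∈ s, HasDerivAt y (-(1 / t) * y t) t) : ∃ K, ∀ t ∈ s, t * y t = K := by
  refine hs.exists_const_of_hasDerivAt_zero hs' fun t ht => ?_
  refine ((hasDerivAt_id' t).mul (hy t ht)).congr_deriv ?_
  field_simp [hs₀ t ht]
  ring

theorem IsOpen.exists_eq_sqrt_add_of_hasDerivAt {s : Set ℝ} (hs : IsOpen s)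
    (hs' : IsPreconnected s) (hs₀ : ∀ t ∈ s, 0 < t) {F : ℝ → ℝ} {c : ℝ}
    (hF : ∀ t ∈ s, HasDerivAt F (F t / t - c / √t) t) :
    ∃ k, ∀ t ∈ s, F t = 2 * c * √t + k * t := by
  obtain ⟨k, hk⟩ : ∃ k, ∀ t ∈ s, F t / t - 2 * c / √t = k := by
    refine hs.exists_const_of_hasDerivAt_zero hs' fun t ht => ?_
    have ht₀ := hs₀ t ht
    have hsqrt : 0 < √t := sqrt_pos.mpr ht₀
    refine (((hF t ht).div (hasDerivAt_id' t) ht₀.ne').sub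
      ((hasDerivAt_const t (2 * c)).div (hasDerivAt_sqrt ht₀.ne') hsqrt.ne')).congr_deriv ?_
    field_simp
    rw [sq_sqrt ht₀.le]
    ring
  refine ⟨k, fun t ht => ?_⟩
  have ht₀ := hs₀ t ht
  have hsqrt : 0 < √t := sqrt_pos.mpr ht₀
  rw [← hk t ht]
  field_simp
  rw [sq_sqrt ht₀.le]
  ring

theorem stmt14_general (s₁ s₂ : ℝ) (hs₁ : 0 < s₁) (hs : s₁ < s₂)
    (F F' : ℝ → ℝ)
    (hder : ∀ t ∈ Set.Ioo s₁ s₂, HasDerivAt F (F' t) t)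
    (hcontF : ContinuousOn F (Set.Icc s₁ s₂))
    (hstrict : ∀ t ∈ Set.Ioo s₁ s₂, F' t < F t / t)
    (hEL : ∀ t ∈ Set.Ioo s₁ s₂,
      HasDerivAt (fun u => (F u / u - F' u) ^ 2)
        (-(1 / t) * (F t / t - F' t) ^ 2) t) :
    ∃ c₁ c₂ : ℝ, ∀ t ∈ Set.Icc s₁ s₂, F t = c₁ * Real.sqrt t + c₂ * t := by
  have hpos : ∀ t ∈ Ioo s₁ s₂, 0 < t := fun t ht => hs₁.trans ht.1
  obtain ⟨K, hK⟩ := isOpen_Ioo.exists_mul_eq_const_of_hasDerivAt_neg_div isPreconnected_Ioo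
    (fun t ht => (hpos t ht).ne') hEL
  have hF' : ∀ t ∈ Ioo s₁ s₂, HasDerivAt F (F t / t - √K / √t) t := by
    intro t ht
    have hG : F t / t - F' t = √K / √t := by
      rw [← hK t ht, sqrt_mul (hpos t ht).le, sqrt_sq (sub_pos.mpr (hstrict t ht)).le,
        mul_div_cancel_left₀ _ (sqrt_pos.mpr (hpos t ht)).ne']
    rw [← hG, sub_sub_cancel]
    exact hder t ht
  obtain ⟨k, hk⟩ := isOpen_Ioo.exists_eq_sqrt_add_of_hasDerivAt isPreconnected_Ioo hpos hF'
  refine ⟨2 * √K, k, fun t ht => ?_⟩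
  refine EqOn.of_subset_closure hk hcontF (by fun_prop) Ioo_subset_Icc_self ?_ ht
  rw [closure_Ioo hs.ne]

/-- If `F` is `C²` on `[s₁,s₂] ⊆ (0,∞)`, satisfies `F'(t) < F(t)/t` on `(s₁,s₂)`, and
solves the Euler–Lagrange equation `-d/dt[(F(t)/t - F'(t))²] = (1/t)(F(t)/t - F'(t))²`,
then `F(t) = c₁√t + c₂t` for some constants. -/
theorem stmt14 (s₁ s₂ : ℝ) (hs₁ : 0 < s₁) (hs : s₁ < s₂)
    (F F' F'' : ℝ → ℝ)
    (hder : ∀ t ∈ Set.Ioo s₁ s₂, HasDerivAt F (F' t) t)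
    (hder2 : ∀ t ∈ Set.Ioo s₁ s₂, HasDerivAt F' (F'' t) t)
    (hcontF : ContinuousOn F (Set.Icc s₁ s₂))
    (hcontF' : ContinuousOn F' (Set.Ioo s₁ s₂))
    (hcontF'' : ContinuousOn F'' (Set.Ioo s₁ s₂))
    (hstrict : ∀ t ∈ Set.Ioo s₁ s₂, F' t < F t / t)
    (hEL : ∀ t ∈ Set.Ioo s₁ s₂,
      HasDerivAt (fun u => (F u / u - F' u) ^ 2)
        (-(1 / t) * (F t / t - F' t) ^ 2) t) :
    ∃ c₁ c₂ : ℝ, ∀ t ∈ Set.Icc s₁ s₂, F t = c₁ * Real.sqrt t + c₂ * t :=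
  stmt14_general s₁ s₂ hs₁ hs F F' hder hcontF hstrict hEL
end

section
/- Let 0 < a < 1/2, t_B = 2a, x_B = 4(1-√(2a))/(3-2√(2a)), and define ρ on [0,1] by ρ(s) = ((t_B - a·x_B)/(t_B(t_B-a)))² = 1/(a²(3-2√(2a))²) (a constant) for s ∈ [0, t_B], and ρ(s) = ((1/s)·x_B(√s - s)/(√(t_B) - t_B) - x_B((1/(2√s)) - 1)/(√(t_B) - t_B))² for s ∈ [t_B, 1]. Then ∫_0^1 ρ(s)^{3/2} ds = t_B·(1/(a²(3-2√(2a))²))^{3/2} + ∫_{t_B}^1 ρ(s)^{3/2} ds = 2/(a²(3-2√(2a))²), so the total rate I = (4/3)∫_0^1 ρ^{3/2} equals 8/(3a²(3-2√(2a))²). -/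
open Real intervalIntegral

lemma aux_pow2_rpow (x : ℝ) (hx : 0 ≤ x) (y : ℝ) : (x^2) ^ y = x ^ (2*y) := by
  rw [← Real.rpow_natCast x 2, ← Real.rpow_mul hx]
  norm_num

lemma aux_sq_32 (x : ℝ) (hx : 0 ≤ x) : (x^2) ^ (3/2:ℝ) = x^3 := by
  rw [aux_pow2_rpow x hx, show (2:ℝ)*(3/2) = ((3:ℕ):ℝ) by norm_num, Real.rpow_natCast]

lemma aux_sq_n32 (x : ℝ) (hx : 0 < x) : (x^2) ^ (-(3/2):ℝ) = (x^3)⁻¹ := by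
  rw [aux_pow2_rpow x hx.le, show (2:ℝ)*(-(3/2)) = -((3:ℕ):ℝ) by norm_num,
    Real.rpow_neg hx.le, Real.rpow_natCast]

lemma aux_sq_n12 (x : ℝ) (hx : 0 < x) : (x^2) ^ (-(1/2):ℝ) = x⁻¹ := by
  rw [aux_pow2_rpow x hx.le, show (2:ℝ)*(-(1/2)) = -((1:ℕ):ℝ) by norm_num,
    Real.rpow_neg hx.le, Real.rpow_natCast, pow_one]

/-- Computation of the rate: with `t_B = 2a`, `x_B = 4(1-√(2a))/(3-2√(2a))`, and `ρ`
constant equal to `1/(a²(3-2√(2a))²)` on `[0,t_B]` and equal to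
`((1/s)·x_B(√s-s)/(√t_B - t_B) - x_B(1/(2√s)-1)/(√t_B - t_B))²` on `[t_B,1]`,
we have `t_B·(1/(a²(3-2√(2a))²))^{3/2} + ∫_{t_B}^1 ρ^{3/2} = 2/(a²(3-2√(2a))²)`,
hence the total rate `I = (4/3)∫_0^1 ρ^{3/2}` equals `8/(3a²(3-2√(2a))²)`. -/
theorem stmt18 (a : ℝ) (ha : 0 < a) (ha' : a < 1 / 2) :
    let tB : ℝ := 2 * a
    let xB : ℝ := 4 * (1 - Real.sqrt (2 * a)) / (3 - 2 * Real.sqrt (2 * a))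
    let ρ : ℝ → ℝ := fun s =>
      if s ≤ tB then 1 / (a ^ 2 * (3 - 2 * Real.sqrt (2 * a)) ^ 2)
      else ((1 / s) * (xB * (Real.sqrt s - s) / (Real.sqrt tB - tB)) -
        xB * (1 / (2 * Real.sqrt s) - 1) / (Real.sqrt tB - tB)) ^ 2
    tB * (1 / (a ^ 2 * (3 - 2 * Real.sqrt (2 * a)) ^ 2)) ^ (3 / 2 : ℝ) +
      (∫ s in tB..1, ρ s ^ (3 / 2 : ℝ)) =
        2 / (a ^ 2 * (3 - 2 * Real.sqrt (2 * a)) ^ 2) ∧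
    (4 / 3 : ℝ) * (∫ s in (0 : ℝ)..1, ρ s ^ (3 / 2 : ℝ)) =
      8 / (3 * a ^ 2 * (3 - 2 * Real.sqrt (2 * a)) ^ 2) := by
  intro tB xB ρ
  have ha2 : 0 < 2 * a := by linarith
  set b : ℝ := Real.sqrt (2 * a) with hbdef
  have hb0 : 0 < b := Real.sqrt_pos.mpr ha2
  have hb2 : b ^ 2 = 2 * a := Real.sq_sqrt ha2.le
  have hb1 : b < 1 := by nlinarith [hb2, hb0]
  have h3 : 0 < 3 - 2 * b := by linarith
  have h1b : 0 < 1 - b := by linarith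
  have htB : tB = b ^ 2 := hb2.symm
  have htBpos : 0 < tB := ha2
  have htB1 : tB < 1 := by rw [htB]; nlinarith
  have hsqrt_tB : Real.sqrt tB = b := by
    show Real.sqrt (2 * a) = b; rw [hbdef]
  have hxB : xB = 4 * (1 - b) / (3 - 2 * b) := rfl
  have hρ : ρ = fun s => if s ≤ tB then 1 / (a ^ 2 * (3 - 2 * b) ^ 2)
      else ((1 / s) * (xB * (Real.sqrt s - s) / (Real.sqrt tB - tB)) -
        xB * (1 / (2 * Real.sqrt s) - 1) / (Real.sqrt tB - tB)) ^ 2 := rfl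
  set K : ℝ := 1 / (a ^ 2 * (3 - 2 * b) ^ 2) with hKdef
  set C : ℝ := 8 / (b ^ 3 * (3 - 2 * b) ^ 3) with hCdef
  have hane : a ≠ 0 := ne_of_gt ha
  have h3ne : (3 - 2 * b) ≠ 0 := ne_of_gt h3
  have hbne : b ≠ 0 := ne_of_gt hb0
  have hKsq : K = (2 / (b ^ 2 * (3 - 2 * b))) ^ 2 := by
    rw [hKdef]
    have : a = b ^ 2 / 2 := by linarith [hb2]
    rw [this]; field_simp
  have hK32 : K ^ (3/2 : ℝ) = (2 / (b ^ 2 * (3 - 2 * b))) ^ 3 := by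
    rw [hKsq, aux_sq_32 _ (by positivity)]
  -- pointwise identity on [tB, 1]
  have hcong2 : Set.EqOn (fun s => ρ s ^ (3/2 : ℝ)) (fun s => C * s ^ (-(3/2) : ℝ))
      (Set.uIcc tB 1) := by
    intro s hs
    rw [Set.uIcc_of_le htB1.le] at hs
    obtain ⟨hs1, hs2⟩ := hs
    have hspos : 0 < s := lt_of_lt_of_le htBpos hs1
    simp only []
    by_cases hstB : s ≤ tB
    · have hseq : s = tB := le_antisymm hstB hs1
      rw [hρ]
      simp only [if_pos hstB]
      rw [hseq, hK32, htB, aux_sq_n32 _ hb0, hCdef]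
      field_simp; ring
    · rw [hρ]
      simp only [if_neg hstB]
      set t : ℝ := Real.sqrt s with htdef
      have ht0 : 0 < t := Real.sqrt_pos.mpr hspos
      have ht2 : t ^ 2 = s := Real.sq_sqrt hspos.le
      have htne : t ≠ 0 := ne_of_gt ht0
      have hsne : s ≠ 0 := ne_of_gt hspos
      have hbb : Real.sqrt tB - tB = b * (1 - b) := by
        rw [hsqrt_tB, htB]; ring
      have hbbne : b * (1 - b) ≠ 0 := by positivity
      have hexpr : (1 / s) * (xB * (t - s) / (Real.sqrt tB - tB)) -
          xB * (1 / (2 * t) - 1) / (Real.sqrt tB - tB) = 2 / (b * (3 - 2 * b) * t) := by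
        rw [hbb, hxB, ← ht2]
        field_simp
        ring
      rw [hexpr, ← ht2, aux_sq_n32 _ ht0]
      have : (2 / (b * (3 - 2 * b) * t)) ^ 2 = (2 / (b * (3 - 2 * b) * t)) ^ 2 := rfl
      rw [show ((2 / (b * (3 - 2 * b) * t)) ^ 2 : ℝ) = (2 / (b * (3 - 2 * b) * t)) ^ 2 from rfl]
      rw [aux_sq_32 _ (by positivity)]
      rw [hCdef]; field_simp; ring
  have h0notin : (0:ℝ) ∉ Set.uIcc tB (1:ℝ) := by
    rw [Set.uIcc_of_le htB1.le]
    intro h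
    exact absurd h.1 (not_le.mpr htBpos)
  -- the integral over [tB, 1]
  have hJ : (∫ s in tB..1, ρ s ^ (3/2 : ℝ)) = C * (2 / b - 2) := by
    rw [intervalIntegral.integral_congr hcong2, intervalIntegral.integral_const_mul,
      integral_rpow (Or.inr ⟨by norm_num, h0notin⟩)]
    rw [show (-(3/2) + 1 : ℝ) = -(1/2) by norm_num, Real.one_rpow, htB, aux_sq_n12 _ hb0]
    congr 1
    field_simp
    ring
  have key : tB * K ^ (3/2 : ℝ) + (∫ s in tB..1, ρ s ^ (3/2 : ℝ)) = 2 * K := by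
    rw [hJ, hK32, htB, hKdef, hCdef]
    have : a = b ^ 2 / 2 := by linarith [hb2]
    rw [this]
    field_simp
    rw [div_eq_div_iff (pow_pos (by linarith) _).ne' (pow_pos (by linarith) _).ne']; ring
  constructor
  · rw [key, hKdef]; ring
  · -- split the integral
    have hi1 : IntervalIntegrable (fun s => ρ s ^ (3/2 : ℝ)) MeasureTheory.volume 0 tB := by
      apply ContinuousOn.intervalIntegrable
      apply ContinuousOn.congr (continuousOn_const (c := K ^ (3/2 : ℝ)))
      intro s hs
      rw [Set.uIcc_of_le htBpos.le] at hs
      rw [hρ]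
      simp only [if_pos hs.2, ← hKdef]
    have hi2 : IntervalIntegrable (fun s => ρ s ^ (3/2 : ℝ)) MeasureTheory.volume tB 1 := by
      apply ContinuousOn.intervalIntegrable
      apply ContinuousOn.congr (f := fun s => C * s ^ (-(3/2) : ℝ)) _ hcong2
      apply ContinuousOn.mul continuousOn_const
      intro x hx
      exact (Real.continuousAt_rpow_const x _ (Or.inl (fun h => h0notin (h ▸ hx)))).continuousWithinAt
    have hsplit : (∫ s in (0:ℝ)..1, ρ s ^ (3/2 : ℝ)) =
        (∫ s in (0:ℝ)..tB, ρ s ^ (3/2 : ℝ)) + (∫ s in tB..1, ρ s ^ (3/2 : ℝ)) :=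
      (intervalIntegral.integral_add_adjacent_intervals hi1 hi2).symm
    have hfirst : (∫ s in (0:ℝ)..tB, ρ s ^ (3/2 : ℝ)) = tB * K ^ (3/2 : ℝ) := by
      rw [intervalIntegral.integral_congr (g := fun _ => K ^ (3/2 : ℝ))]
      · rw [intervalIntegral.integral_const, smul_eq_mul, sub_zero]
      · intro s hs
        rw [Set.uIcc_of_le htBpos.le] at hs
        simp only []
        rw [hρ]
        simp only [if_pos hs.2, ← hKdef]
    rw [hsplit, hfirst, key, hKdef]
    field_simp
    ring
end
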